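/- arXiv:2006.10903 — 6 statements merged into one kernel-verified Lean document; each statement's English description precedes it below -/
import Mathlib

section
/- Under partial PL and smoothness over disjoint blocks (Δ_i)_{i=1}^D partitioning [p] with parameters L_i ≥ μ_i ≥ 0, setting μ = Σμ_i and L = ΣL_i, running gradient descent with η ≤ 1/L from θ_0 yields ‖θ_{Δ_i,τ} − θ_{Δ_i,0}‖² ≤ 8 L_i L(θ_0)/μ² for all iterates τ ≥ 0 and all i. -/
/-!
Gradient descent with step `η ≤ 1/L` decreases `f` by the factor `1 - ημ` per step (descent lemma
plus PL), so `f(θ_τ) ≤ (1 - ημ)^τ f(θ₀)`. Block smoothness together with `f ≥ 0` bounds the block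
gradient by `‖∇_{Δᵢ} f‖² ≤ 2 Lᵢ f`, so the `τ`-th step moves the block `Δᵢ` by at most
`η √(2 Lᵢ f(θ₀)) ρ^τ` with `ρ = √(1 - ημ) ≤ 1 - ημ/2`. Summing the geometric series gives a total
displacement of at most `2 √(2 Lᵢ f(θ₀)) / μ`.
-/

open Finset

/-- Gradient of `f : ℝ^p → ℝ` as the vector of partial derivatives. -/
noncomputable def grad {p : ℕ} (f : (Fin p → ℝ) → ℝ) (θ : Fin p → ℝ) : Fin p → ℝ :=
  fun j => fderiv ℝ f θ (Pi.single j 1)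

lemma dist_zero_le_of_le_geometric {α : Type*} [PseudoMetricSpace α] {r C : ℝ} {x : ℕ → α}
    (hr : r < 1) (hx : ∀ n, dist (x n) (x (n + 1)) ≤ C * r ^ n) (n : ℕ) :
    dist (x 0) (x n) ≤ C / (1 - r) :=
  (dist_le_range_sum_dist x n).trans <| (sum_le_sum fun k _ => hx k).trans <|
    sum_le_hasSum _ (fun k _ => dist_nonneg.trans (hx k)) (aux_hasSum_of_le_geometric hr hx)

lemma half_le_one_sub_sqrt_one_sub {a : ℝ} (ha : a ≤ 1) : a / 2 ≤ 1 - √(1 - a) := by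
  have : √(1 - a) ≤ 1 - a / 2 :=
    (Real.sqrt_le_left (by linarith)).2 (by nlinarith [sq_nonneg a])
  linarith

lemma sqrt_pow_eq_pow_sqrt {r : ℝ} (hr : 0 ≤ r) (n : ℕ) : √(r ^ n) = √r ^ n := by
  rw [← Real.sqrt_sq (pow_nonneg (Real.sqrt_nonneg r) n), ← pow_mul, mul_comm, pow_mul,
    Real.sq_sqrt hr]

lemma le_two_mul_mul_of_forall_le {G K a : ℝ} (hK : 0 ≤ K)
    (h : ∀ t, 0 ≤ t → t * G - K / 2 * t ^ 2 * G ≤ a) : G ≤ 2 * K * a := by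
  rcases hK.eq_or_lt with rfl | hK
  · by_contra! hG
    rw [mul_zero, zero_mul] at hG
    have := h ((|a| + 1) / G) (by positivity)
    simp only [zero_div, zero_mul, sub_zero, div_mul_cancel₀ _ hG.ne'] at this
    linarith [le_abs_self a]
  · have := h K⁻¹ (by positivity)
    field_simp at this
    linarith

variable {p : ℕ}

lemma fderiv_apply_eq_sum_mul_grad (f : (Fin p → ℝ) → ℝ) (x v : Fin p → ℝ) :
    fderiv ℝ f x v = ∑ j, v j * grad f x j := by
  conv_lhs => rw [← univ_sum_single v]
  simp only [map_sum, grad]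
  refine sum_congr rfl fun j _ => ?_
  rw [← smul_eq_mul, ← map_smul, ← Pi.single_smul', smul_eq_mul, mul_one]

lemma hasDerivAt_comp_add_smul {f : (Fin p → ℝ) → ℝ} (hf : Differentiable ℝ f)
    (x v : Fin p → ℝ) (t : ℝ) :
    HasDerivAt (fun s : ℝ => f (x + s • v)) (∑ j, v j * grad f (x + t • v) j) t := by
  have hline : HasDerivAt (fun s : ℝ => x + s • v) v t := by
    simpa using ((hasDerivAt_id t).smul_const v).const_add x
  have := (hf (x + t • v)).hasFDerivAt.comp_hasDerivAt t hline
  rwa [fderiv_apply_eq_sum_mul_grad] at this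

def blockVec (S : Finset (Fin p)) (x : Fin p → ℝ) : EuclideanSpace ℝ S :=
  WithLp.toLp 2 fun j => x j

lemma dist_blockVec (S : Finset (Fin p)) (x y : Fin p → ℝ) :
    dist (blockVec S x) (blockVec S y) = √(∑ j ∈ S, (x j - y j) ^ 2) := by
  simp [blockVec, EuclideanSpace.dist_eq, Real.dist_eq, sq_abs,
    Finset.sum_attach S fun j => (x j - y j) ^ 2]

lemma dist_blockVec_sub_mul (S : Finset (Fin p)) (x g : Fin p → ℝ) {η : ℝ} (hη : 0 ≤ η) :
    dist (blockVec S x) (blockVec S fun j => x j - η * g j) = η * √(∑ j ∈ S, g j ^ 2) := by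
  simp only [dist_blockVec, sub_sub_cancel, mul_pow, ← mul_sum]
  rw [Real.sqrt_mul (sq_nonneg η), Real.sqrt_sq hη]

def GradLipschitzOnBlock (f : (Fin p → ℝ) → ℝ) (S : Finset (Fin p)) (K : ℝ) : Prop :=
  ∀ θ θ' : Fin p → ℝ, (∀ j ∉ S, θ j = θ' j) →
    ∑ j ∈ S, (grad f θ j - grad f θ' j) ^ 2 ≤ K ^ 2 * ∑ j ∈ S, (θ j - θ' j) ^ 2

namespace GradLipschitzOnBlock

variable {f : (Fin p → ℝ) → ℝ} {S : Finset (Fin p)} {K : ℝ}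

lemma sum_grad_sub_mul_le (hL : GradLipschitzOnBlock f S K) (hK : 0 ≤ K)
    (x : Fin p → ℝ) {v : Fin p → ℝ} (hv : ∀ j ∉ S, v j = 0) {t : ℝ} (ht : 0 ≤ t) :
    ∑ j ∈ S, (grad f (x + t • v) j - grad f x j) * v j ≤ K * t * ∑ j ∈ S, v j ^ 2 := by
  have hgrad : √(∑ j ∈ S, (grad f (x + t • v) j - grad f x j) ^ 2) ≤
      K * t * √(∑ j ∈ S, v j ^ 2) := by
    have hdisp : ∑ j ∈ S, ((x + t • v) j - x j) ^ 2 = t ^ 2 * ∑ j ∈ S, v j ^ 2 := by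
      simp [mul_sum, mul_pow]
    have h := hL (x + t • v) x fun j hj => by simp [hv j hj]
    rw [hdisp, ← mul_assoc, ← mul_pow] at h
    calc _ ≤ √((K * t) ^ 2 * ∑ j ∈ S, v j ^ 2) := Real.sqrt_le_sqrt h
      _ = K * t * √(∑ j ∈ S, v j ^ 2) := by
        rw [Real.sqrt_mul (sq_nonneg _), Real.sqrt_sq (by positivity)]
  calc _ ≤ √(∑ j ∈ S, (grad f (x + t • v) j - grad f x j) ^ 2) * √(∑ j ∈ S, v j ^ 2) :=
        Real.sum_mul_le_sqrt_mul_sqrt _ _ _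
    _ ≤ K * t * √(∑ j ∈ S, v j ^ 2) * √(∑ j ∈ S, v j ^ 2) := by gcongr
    _ = K * t * ∑ j ∈ S, v j ^ 2 := by
        rw [mul_assoc, Real.mul_self_sqrt (sum_nonneg fun _ _ => sq_nonneg _)]

/-- The descent lemma along a direction supported on the block `S`. -/
lemma le_add_sum_grad_mul_add (hf : Differentiable ℝ f) (hL : GradLipschitzOnBlock f S K)
    (hK : 0 ≤ K) (x : Fin p → ℝ) {v : Fin p → ℝ} (hv : ∀ j ∉ S, v j = 0) :
    f (x + v) ≤ f x + ∑ j ∈ S, grad f x j * v j + K / 2 * ∑ j ∈ S, v j ^ 2 := by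
  set c := ∑ j ∈ S, grad f x j * v j
  set V := ∑ j ∈ S, v j ^ 2
  have hsupp : ∀ y, ∑ j, v j * grad f y j = ∑ j ∈ S, grad f y j * v j := fun y => by
    rw [← sum_subset (subset_univ S) fun j _ hj => by rw [hv j hj, zero_mul]]
    simp only [mul_comm]
  let ψ : ℝ → ℝ := fun t => f (x + t • v) - t * c - K * V / 2 * t ^ 2
  have hψ : ∀ t, HasDerivAt ψ (∑ j ∈ S, (grad f (x + t • v) j - grad f x j) * v j - K * V * t) t := by
    intro t
    have h := ((hasDerivAt_comp_add_smul hf x v t).sub ((hasDerivAt_id t).mul_const c)).sub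
      ((hasDerivAt_pow 2 t).const_mul (K * V / 2))
    refine h.congr_deriv ?_
    simp only [hsupp, sub_mul, sum_sub_distrib, c]
    norm_num
    ring
  have hanti : AntitoneOn ψ (Set.Ici 0) := by
    refine antitoneOn_of_hasDerivWithinAt_nonpos (convex_Ici 0)
      (fun t _ => (hψ t).continuousAt.continuousWithinAt) (fun t _ => (hψ t).hasDerivWithinAt)
      fun t ht => ?_
    rw [interior_Ici, Set.mem_Ioi] at ht
    have := hL.sum_grad_sub_mul_le hK x hv ht.le
    linarith
  have := hanti (Set.self_mem_Ici) (Set.mem_Ici.2 zero_le_one) zero_le_one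
  simp only [ψ, one_smul, zero_smul, add_zero, zero_mul, sub_zero, one_mul, one_pow] at this
  ring_nf at this ⊢
  linarith

/-- The step `-t ∇_S f(y)` on the block cannot push `f` below zero. -/
lemma sum_sq_grad_le (hf : Differentiable ℝ f) (hL : GradLipschitzOnBlock f S K) (hK : 0 ≤ K)
    (hf₀ : ∀ θ, 0 ≤ f θ) (y : Fin p → ℝ) : ∑ j ∈ S, grad f y j ^ 2 ≤ 2 * K * f y := by
  refine le_two_mul_mul_of_forall_le hK fun t _ => ?_
  let v : Fin p → ℝ := fun j => if j ∈ S then -(t * grad f y j) else 0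
  have h := hL.le_add_sum_grad_mul_add hf hK y (v := v) fun j hj => if_neg hj
  have hc : ∑ j ∈ S, grad f y j * v j = -(t * ∑ j ∈ S, grad f y j ^ 2) := by
    rw [mul_sum, ← sum_neg_distrib]
    exact sum_congr rfl fun j hj => by simp only [v, if_pos hj]; ring
  have hV : ∑ j ∈ S, v j ^ 2 = t ^ 2 * ∑ j ∈ S, grad f y j ^ 2 := by
    rw [mul_sum]
    exact sum_congr rfl fun j hj => by simp only [v, if_pos hj]; ring
  rw [hc, hV] at h
  linarith [hf₀ (y + v)]

lemma gradientDescent_step (hf : Differentiable ℝ f) (hL : GradLipschitzOnBlock f univ K)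
    (hK : 0 ≤ K) {η μ : ℝ} (hη : 0 ≤ η) (hηK : η * K ≤ 1) {x : Fin p → ℝ}
    (hPL : 2 * μ * f x ≤ ∑ j, grad f x j ^ 2) :
    f (fun j => x j - η * grad f x j) ≤ (1 - η * μ) * f x := by
  have hx : (fun j => x j - η * grad f x j) = x + (-η) • grad f x := by
    ext j
    simp [sub_eq_add_neg]
  have h := hL.le_add_sum_grad_mul_add hf hK x (v := (-η) • grad f x)
    fun j hj => absurd (mem_univ j) hj
  have hc : ∑ j, grad f x j * ((-η) • grad f x) j = -η * ∑ j, grad f x j ^ 2 := by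
    rw [mul_sum]
    exact sum_congr rfl fun j _ => by simp only [Pi.smul_apply, smul_eq_mul]; ring
  have hV : ∑ j, ((-η) • grad f x) j ^ 2 = η ^ 2 * ∑ j, grad f x j ^ 2 := by
    rw [mul_sum]
    exact sum_congr rfl fun j _ => by simp only [Pi.smul_apply, smul_eq_mul]; ring
  rw [hc, hV, ← hx] at h
  have hG : 0 ≤ ∑ j, grad f x j ^ 2 := sum_nonneg fun _ _ => sq_nonneg _
  nlinarith [mul_le_mul_of_nonneg_right hηK (mul_nonneg hη hG), mul_le_mul_of_nonneg_left hPL hη]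

section GradientDescent

variable {θ : ℕ → Fin p → ℝ} {η : ℝ}

lemma gradientDescent_le_geom (hf : Differentiable ℝ f) (hL : GradLipschitzOnBlock f univ K)
    (hK : 0 ≤ K) (hη : 0 ≤ η) (hηK : η * K ≤ 1) {μ : ℝ} (hημ : η * μ ≤ 1)
    (hPL : ∀ x, 2 * μ * f x ≤ ∑ j, grad f x j ^ 2)
    (hgd : ∀ t, θ (t + 1) = fun j => θ t j - η * grad f (θ t) j) (t : ℕ) :
    f (θ t) ≤ (1 - η * μ) ^ t * f (θ 0) :=
  le_geom (u := fun t => f (θ t)) (by linarith) t fun k _ => by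
    rw [hgd]
    exact hL.gradientDescent_step hf hK hη hηK (hPL _)

lemma dist_blockVec_gradientDescent_le (hf : Differentiable ℝ f)
    (hL : GradLipschitzOnBlock f S K) (hK : 0 ≤ K) (hf₀ : ∀ θ, 0 ≤ f θ) (hη : 0 ≤ η)
    {r : ℝ} (hr : 0 ≤ r) (hdecay : ∀ t, f (θ t) ≤ r ^ t * f (θ 0))
    (hgd : ∀ t, θ (t + 1) = fun j => θ t j - η * grad f (θ t) j) (t : ℕ) :
    dist (blockVec S (θ t)) (blockVec S (θ (t + 1))) ≤ η * √(2 * K * f (θ 0)) * √r ^ t := by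
  rw [hgd, dist_blockVec_sub_mul _ _ _ hη, mul_assoc]
  gcongr
  calc √(∑ j ∈ S, grad f (θ t) j ^ 2) ≤ √(2 * K * f (θ t)) :=
        Real.sqrt_le_sqrt (hL.sum_sq_grad_le hf hK hf₀ _)
    _ ≤ √(2 * K * f (θ 0) * r ^ t) := by
        rw [mul_assoc _ (f (θ 0)), mul_comm (f (θ 0))]
        gcongr
        exact hdecay t
    _ = √(2 * K * f (θ 0)) * √r ^ t := by
        rw [Real.sqrt_mul' _ (pow_nonneg hr t), sqrt_pow_eq_pow_sqrt hr]

end GradientDescent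

end GradLipschitzOnBlock

theorem block_distance_bound_general {p D : ℕ} (f : (Fin p → ℝ) → ℝ)
    (hdiff : Differentiable ℝ f)
    (hmin : ∀ θ, 0 ≤ f θ)
    (Δ : Fin D → Finset (Fin p))
    (μ Li : Fin D → ℝ)
    (horder : ∀ i, 0 ≤ μ i ∧ μ i ≤ Li i)
    (hμpos : 0 < ∑ i', μ i')
    (hPLip : ∀ i (θ θ' : Fin p → ℝ), (∀ j ∉ Δ i, θ j = θ' j) →
      ∑ j ∈ Δ i, (grad f θ j - grad f θ' j) ^ 2 ≤ (Li i) ^ 2 * ∑ j ∈ Δ i, (θ j - θ' j) ^ 2)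
    (hLip : ∀ θ θ' : Fin p → ℝ,
      ∑ j, (grad f θ j - grad f θ' j) ^ 2 ≤ (∑ i', Li i') ^ 2 * ∑ j, (θ j - θ' j) ^ 2)
    (hPL : ∀ θ, 2 * (∑ i', μ i') * f θ ≤ ∑ j, (grad f θ j) ^ 2)
    (η : ℝ) (hηpos : 0 < η) (hη : η ≤ 1 / ∑ i', Li i')
    (θ : ℕ → Fin p → ℝ)
    (hgd : ∀ τ, θ (τ + 1) = fun j => θ τ j - η * grad f (θ τ) j)
    (τ : ℕ) (i : Fin D) :
    ∑ j ∈ Δ i, (θ τ j - θ 0 j) ^ 2 ≤ 8 * Li i * f (θ 0) / (∑ i', μ i') ^ 2 := by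
  set μs := ∑ i', μ i'
  set Ls := ∑ i', Li i'
  have hμL : μs ≤ Ls := sum_le_sum fun i _ => (horder i).2
  have hLs : 0 < Ls := hμpos.trans_le hμL
  have hηL : η * Ls ≤ 1 := by rwa [le_div_iff₀ hLs] at hη
  have hημ : η * μs ≤ 1 := (mul_le_mul_of_nonneg_left hμL hηpos.le).trans hηL
  have hLi : 0 ≤ Li i := (horder i).1.trans (horder i).2
  have hdecay := GradLipschitzOnBlock.gradientDescent_le_geom hdiff (fun θ θ' _ => hLip θ θ')
    hLs.le hηpos.le hηL hημ hPL hgd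
  have hstep := GradLipschitzOnBlock.dist_blockVec_gradientDescent_le hdiff (hPLip i) hLi hmin
    hηpos.le (by linarith) hdecay hgd
  set C := √(2 * Li i * f (θ 0))
  have hρ : η * μs / 2 ≤ 1 - √(1 - η * μs) := half_le_one_sub_sqrt_one_sub hημ
  have hdisp : dist (blockVec (Δ i) (θ 0)) (blockVec (Δ i) (θ τ)) ≤ 2 * C / μs := by
    refine (dist_zero_le_of_le_geometric (by linarith [mul_pos hηpos hμpos]) hstep τ).trans ?_
    calc η * C / (1 - √(1 - η * μs)) ≤ η * C / (η * μs / 2) := by gcongr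
      _ = 2 * C / μs := by field_simp
  calc ∑ j ∈ Δ i, (θ τ j - θ 0 j) ^ 2 = dist (blockVec (Δ i) (θ 0)) (blockVec (Δ i) (θ τ)) ^ 2 := by
        rw [dist_comm, dist_blockVec, Real.sq_sqrt (sum_nonneg fun _ _ => sq_nonneg _)]
    _ ≤ (2 * C / μs) ^ 2 := by gcongr
    _ = 8 * Li i * f (θ 0) / μs ^ 2 := by
        rw [div_pow, mul_pow, Real.sq_sqrt (by nlinarith [hmin (θ 0)])]
        ring

/-- Under partial PL and smoothness over disjoint blocks partitioning `[p]`, gradient descent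
with step size `η ≤ 1/L` keeps every block close to initialization:
`‖θ_{Δ i, τ} - θ_{Δ i, 0}‖² ≤ 8 Lᵢ f(θ₀) / μ²`. -/
theorem block_distance_bound {p D : ℕ} (f : (Fin p → ℝ) → ℝ)
    (hdiff : Differentiable ℝ f)
    (hmin : ∀ θ, 0 ≤ f θ) (hattain : ∃ θ, f θ = 0)
    (Δ : Fin D → Finset (Fin p))
    (hdisj : ∀ i j, i ≠ j → Disjoint (Δ i) (Δ j))
    (hcover : ∀ k : Fin p, ∃ i, k ∈ Δ i)
    (μ Li : Fin D → ℝ)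
    (horder : ∀ i, 0 ≤ μ i ∧ μ i ≤ Li i)
    (hμpos : 0 < ∑ i', μ i')
    (hPPL : ∀ i θ, 2 * μ i * f θ ≤ ∑ j ∈ Δ i, (grad f θ j) ^ 2)
    (hPLip : ∀ i (θ θ' : Fin p → ℝ), (∀ j ∉ Δ i, θ j = θ' j) →
      ∑ j ∈ Δ i, (grad f θ j - grad f θ' j) ^ 2 ≤ (Li i) ^ 2 * ∑ j ∈ Δ i, (θ j - θ' j) ^ 2)
    (hLip : ∀ θ θ' : Fin p → ℝ,
      ∑ j, (grad f θ j - grad f θ' j) ^ 2 ≤ (∑ i', Li i') ^ 2 * ∑ j, (θ j - θ' j) ^ 2)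
    (hPL : ∀ θ, 2 * (∑ i', μ i') * f θ ≤ ∑ j, (grad f θ j) ^ 2)
    (η : ℝ) (hηpos : 0 < η) (hη : η ≤ 1 / ∑ i', Li i')
    (θ : ℕ → Fin p → ℝ)
    (hgd : ∀ τ, θ (τ + 1) = fun j => θ τ j - η * grad f (θ τ) j)
    (τ : ℕ) (i : Fin D) :
    ∑ j ∈ Δ i, (θ τ j - θ 0 j) ^ 2 ≤ 8 * Li i * f (θ 0) / (∑ i', μ i') ^ 2 :=
  block_distance_bound_general f hdiff hmin Δ μ Li horder hμpos hPLip hLip hPL η hηpos hη θ hgd τ i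
end

section
/- Consider the least-squares loss L(θ) = ½‖y − Σ_{i=1}^D X_i θ_i‖² over blocks θ = (θ_1,…,θ_D) with X_i ∈ R^{n×p_i}, p_i ≥ n, each X_i full row rank. The minimum Euclidean norm interpolating solution θ* = θ_0 + X^†(y − Xθ_0) (where X = [X_1 … X_D]) satisfies ‖θ*_{Δ_i} − θ_{0,Δ_i}‖² ≥ 2 μ_i L(θ_0)/L², where μ_i = σ_min(X_i)², L = ‖X‖². -/
/-!
The displacement is `θ* - θ₀ = Xᵀ v` with `X Xᵀ v = r := y - X θ₀`. Its block `i` is `Xᵢᵀ v`, of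
squared norm at least `μᵢ ‖v‖²`, while `‖r‖ = ‖X Xᵀ v‖ ≤ L ‖v‖`. Hence
`‖(θ* - θ₀)_{Δᵢ}‖² ≥ μᵢ ‖r‖² / L² = 2 μᵢ L(θ₀) / L²`.
-/

open Matrix

section QuadraticBound

variable {m n : Type*} [Fintype m] [Fintype n]

lemma sum_sq_transpose_mulVec (X : Matrix m n ℝ) (v : m → ℝ) :
    ∑ j, (Xᵀ *ᵥ v) j ^ 2 = ∑ k, v k * (X *ᵥ (Xᵀ *ᵥ v)) k := by
  have h := dotProduct_mulVec v X (Xᵀ *ᵥ v)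
  rw [← mulVec_transpose] at h
  simpa only [dotProduct, sq] using h.symm

lemma sum_sq_mulVec_transpose_mulVec_le {X : Matrix m n ℝ} {L : ℝ}
    (hL : ∀ w, ∑ k, (X *ᵥ w) k ^ 2 ≤ L * ∑ j, w j ^ 2) (v : m → ℝ) :
    ∑ k, (X *ᵥ (Xᵀ *ᵥ v)) k ^ 2 ≤ L ^ 2 * ∑ k, v k ^ 2 := by
  set R := ∑ k, (X *ᵥ (Xᵀ *ᵥ v)) k ^ 2
  set T := ∑ j, (Xᵀ *ᵥ v) j ^ 2
  have hR : 0 ≤ R := Finset.sum_nonneg fun _ _ => sq_nonneg _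
  have hRT : R ≤ L * T := hL _
  have hCS : T ^ 2 ≤ (∑ k, v k ^ 2) * R := by
    rw [show T = _ from sum_sq_transpose_mulVec X v]
    exact Finset.sum_mul_sq_le_sq_mul_sq _ _ _
  -- `R² ≤ (L T)² ≤ L² ‖v‖² R`, then divide by `R`.
  rcases hR.eq_or_lt with h0 | hpos
  · rw [← h0]
    positivity
  · nlinarith [mul_le_mul_of_nonneg_left hRT hR, mul_le_mul_of_nonneg_left hCS (sq_nonneg L)]

end QuadraticBound

theorem min_norm_block_movement_lower_bound_general {n p D : ℕ}
    (X : Matrix (Fin n) (Fin p) ℝ) (y : Fin n → ℝ) (θ0 : Fin p → ℝ)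
    (Δ : Fin D → Finset (Fin p))
    (μ : Fin D → ℝ) (L : ℝ) (hμpos : ∀ i, 0 < μ i) (hLpos : 0 < L)
    -- `μ i ≤ σ_min(Xᵢ)²` as a quadratic-form lower bound (full row rank of each block):
    (hμ : ∀ i (v : Fin n → ℝ),
      μ i * ∑ k, (v k) ^ 2 ≤ ∑ j ∈ Δ i, (∑ k, X k j * v k) ^ 2)
    -- `L = ‖X‖²` as a quadratic-form upper bound:
    (hL : ∀ w : Fin p → ℝ, ∑ k, (X.mulVec w k) ^ 2 ≤ L * ∑ j, (w j) ^ 2)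
    (hinv : IsUnit (X * X.transpose).det)
    (i : Fin D) :
    let Lloss : (Fin p → ℝ) → ℝ := fun θ => (1 / 2) * ∑ k, (y k - X.mulVec θ k) ^ 2
    let θstar : Fin p → ℝ :=
      θ0 + X.transpose.mulVec ((X * X.transpose)⁻¹.mulVec (y - X.mulVec θ0))
    2 * μ i * Lloss θ0 / L ^ 2 ≤ ∑ j ∈ Δ i, (θstar j - θ0 j) ^ 2 := by
  intro Lloss θstar
  set r := y - X *ᵥ θ0
  set v := (X * Xᵀ)⁻¹ *ᵥ r
  have hmove : ∀ j, θstar j - θ0 j = ∑ k, X k j * v k := fun j => add_sub_cancel_left _ _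
  have hresid : X *ᵥ (Xᵀ *ᵥ v) = r := by
    rw [mulVec_mulVec, mulVec_mulVec, mul_nonsing_inv _ hinv, one_mulVec]
  have hr : ∑ k, r k ^ 2 ≤ L ^ 2 * ∑ k, v k ^ 2 :=
    hresid ▸ sum_sq_mulVec_transpose_mulVec_le hL v
  simp only [hmove]
  rw [div_le_iff₀ (by positivity)]
  calc 2 * μ i * Lloss θ0 = μ i * ∑ k, r k ^ 2 := by simp only [Lloss, r, Pi.sub_apply]; ring
    _ ≤ μ i * (L ^ 2 * ∑ k, v k ^ 2) := mul_le_mul_of_nonneg_left hr (hμpos i).le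
    _ = L ^ 2 * (μ i * ∑ k, v k ^ 2) := by ring
    _ ≤ L ^ 2 * ∑ j ∈ Δ i, (∑ k, X k j * v k) ^ 2 :=
      mul_le_mul_of_nonneg_left (hμ i v) (sq_nonneg L)
    _ = _ := mul_comm _ _

/-- For the block least-squares problem, the minimum-Euclidean-norm interpolating solution
moves each block by at least `2 μᵢ L(θ₀)/L²`, where `μᵢ = σ_min(Xᵢ)²` and `L = ‖X‖²`. -/
theorem min_norm_block_movement_lower_bound {n p D : ℕ}
    (X : Matrix (Fin n) (Fin p) ℝ) (y : Fin n → ℝ) (θ0 : Fin p → ℝ)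
    (Δ : Fin D → Finset (Fin p))
    (hdisj : ∀ i j, i ≠ j → Disjoint (Δ i) (Δ j))
    (hcover : ∀ k : Fin p, ∃ i, k ∈ Δ i)
    (μ : Fin D → ℝ) (L : ℝ) (hμpos : ∀ i, 0 < μ i) (hLpos : 0 < L)
    -- `μ i ≤ σ_min(Xᵢ)²` as a quadratic-form lower bound (full row rank of each block):
    (hμ : ∀ i (v : Fin n → ℝ),
      μ i * ∑ k, (v k) ^ 2 ≤ ∑ j ∈ Δ i, (∑ k, X k j * v k) ^ 2)
    -- `L = ‖X‖²` as a quadratic-form upper bound: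
    (hL : ∀ w : Fin p → ℝ, ∑ k, (X.mulVec w k) ^ 2 ≤ L * ∑ j, (w j) ^ 2)
    (hinv : IsUnit (X * X.transpose).det)
    (i : Fin D) :
    let Lloss : (Fin p → ℝ) → ℝ := fun θ => (1 / 2) * ∑ k, (y k - X.mulVec θ k) ^ 2
    let θstar : Fin p → ℝ :=
      θ0 + X.transpose.mulVec ((X * X.transpose)⁻¹.mulVec (y - X.mulVec θ0))
    2 * μ i * Lloss θ0 / L ^ 2 ≤ ∑ j ∈ Δ i, (θstar j - θ0 j) ^ 2 :=
  min_norm_block_movement_lower_bound_general X y θ0 Δ μ L hμpos hLpos hμ hL hinv i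
end

section
/- In the setting of the block least-squares problem with n = 1 (a single sample), the vector θ^p which agrees with θ* on block Δ_i and with θ_0 elsewhere satisfies L(θ_0) − L(θ^p) ≥ (2μ_i/L − (μ_i/L)²)·L(θ_0), i.e., L(θ^p) ≤ (1 − μ_i/L)² L(θ_0). -/
/-- For a single-sample (`n = 1`) block least-squares problem, keeping only block `Δ i` of the
minimum-distance interpolating solution decreases the loss by at least
`(2μᵢ/L - (μᵢ/L)²) L(θ₀)`, with `μᵢ = ‖xᵢ‖²` and `L = ‖x‖²`. -/
theorem single_sample_block_importance {p D : ℕ}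
    (x : Fin p → ℝ) (y : ℝ) (θ0 : Fin p → ℝ)
    (Δ : Fin D → Finset (Fin p))
    (hdisj : ∀ i j, i ≠ j → Disjoint (Δ i) (Δ j))
    (hcover : ∀ k : Fin p, ∃ i, k ∈ Δ i)
    (hxblock : ∀ k : Fin D, ∃ j ∈ Δ k, x j ≠ 0)
    (i : Fin D) :
    let Lloss : (Fin p → ℝ) → ℝ := fun θ => (1 / 2) * (y - ∑ j, x j * θ j) ^ 2
    let L : ℝ := ∑ j, (x j) ^ 2
    let μi : ℝ := ∑ j ∈ Δ i, (x j) ^ 2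
    let θstar : Fin p → ℝ := fun j => θ0 j + (y - ∑ k, x k * θ0 k) / L * x j
    let θp : Fin p → ℝ := fun j => if j ∈ Δ i then θstar j else θ0 j
    (2 * μi / L - (μi / L) ^ 2) * Lloss θ0 ≤ Lloss θ0 - Lloss θp := by
  intro Lloss L μi θstar θp
  obtain ⟨j0, hj0, hx0⟩ := hxblock i
  have hL : 0 < L := by
    have h1 : (x j0) ^ 2 ≤ L :=
      Finset.single_le_sum (fun k _ => sq_nonneg (x k)) (Finset.mem_univ j0)
    have h2 : 0 < (x j0) ^ 2 := by positivity
    linarith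
  have hLne : L ≠ 0 := ne_of_gt hL
  set r : ℝ := y - ∑ k, x k * θ0 k with hr
  have hsum : ∑ j, x j * θp j = (∑ j, x j * θ0 j) + r / L * μi := by
    have h1 : ∀ j, x j * θp j = x j * θ0 j + (if j ∈ Δ i then r / L * (x j) ^ 2 else 0) := by
      intro j
      simp only [θp, θstar]
      by_cases h : j ∈ Δ i <;> simp [h] <;> ring
    rw [Finset.sum_congr rfl (fun j _ => h1 j), Finset.sum_add_distrib]
    congr 1
    rw [Finset.sum_ite_mem, Finset.univ_inter, Finset.mul_sum]
  have hres : y - ∑ j, x j * θp j = r * (1 - μi / L) := by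
    rw [hsum]; field_simp; ring
  have hL0 : Lloss θ0 = (1 / 2) * r ^ 2 := rfl
  have hLp : Lloss θp = (1 / 2) * (r * (1 - μi / L)) ^ 2 := by
    simp only [Lloss, hres]
  rw [hL0, hLp]
  apply le_of_eq
  field_simp
  ring
end

section
/- Let L_Λ(θ) = E[(y − θ^T Λx)²] be the population least-squares loss for scaled features Λx with Λ an invertible diagonal p×p matrix, where (x,y) has finite second moments, Σ = E[xx^T] is invertible, and b = E[xy]. Then the population minimizer is θ̄^Λ = Λ^{-1}Σ^{-1}b, and the natural importance I^N_Δ(θ̄^Λ) = L_Λ(θ̄^Λ_{\bar Δ}) − L_Λ(θ̄^Λ) does not depend on Λ for any index set Δ ⊆ [p]. -/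
open Matrix

/-
Writing `Q(v) = c - 2 bᵀv + vᵀ Σ v` for the unscaled loss, one has `L_Λ(θ) = Q(Λθ)`
because `Λ` is symmetric. The substitution `v = Λθ` maps `θ̄^Λ` to `θ̄ = Σ⁻¹b`, the minimizer of
the convex quadratic `Q`, and commutes with zeroing the coordinates in `Δ` since `Λ` is diagonal.
-/

section

variable {n R : Type*} [Fintype n]

def quadraticLoss [CommRing R] (S : Matrix n n R) (b : n → R) (c : R) (θ : n → R) : R :=
  c - 2 * (b ⬝ᵥ θ) + θ ⬝ᵥ S *ᵥ θ

theorem quadraticLoss_transpose_mul_mul [CommRing R] (S A : Matrix n n R) (b : n → R) (c : R)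
    (θ : n → R) :
    quadraticLoss (Aᵀ * S * A) (Aᵀ *ᵥ b) c θ = quadraticLoss S b c (A *ᵥ θ) := by
  have hlin : Aᵀ *ᵥ b ⬝ᵥ θ = b ⬝ᵥ A *ᵥ θ := by
    rw [mulVec_transpose, dotProduct_mulVec]
  have hquad : θ ⬝ᵥ (Aᵀ * S * A) *ᵥ θ = A *ᵥ θ ⬝ᵥ S *ᵥ (A *ᵥ θ) := by
    rw [← mulVec_mulVec, ← mulVec_mulVec, dotProduct_mulVec, vecMul_transpose]
  simp only [quadraticLoss, hlin, hquad]

theorem quadraticLoss_eq_add_of_mulVec_eq [CommRing R] {S : Matrix n n R} (hS : Sᵀ = S)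
    {b θ₀ : n → R} (hθ₀ : S *ᵥ θ₀ = b) (c : R) (θ : n → R) :
    quadraticLoss S b c θ = quadraticLoss S b c θ₀ + (θ - θ₀) ⬝ᵥ S *ᵥ (θ - θ₀) := by
  have hsymm : θ₀ ⬝ᵥ S *ᵥ θ = θ ⬝ᵥ S *ᵥ θ₀ := by
    rw [dotProduct_mulVec, ← mulVec_transpose, hS, dotProduct_comm]
  subst hθ₀
  simp only [quadraticLoss, mulVec_sub, dotProduct_sub, sub_dotProduct, hsymm,
    dotProduct_comm (S *ᵥ θ₀)]
  ring

theorem quadraticLoss_le_of_mulVec_eq {S : Matrix n n ℝ} (hS : S.PosSemidef) {b θ₀ : n → ℝ}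
    (hθ₀ : S *ᵥ θ₀ = b) (c : ℝ) (θ : n → ℝ) :
    quadraticLoss S b c θ₀ ≤ quadraticLoss S b c θ := by
  have hsymm : Sᵀ = S := (conjTranspose_eq_transpose_of_trivial S).symm.trans hS.isHermitian.eq
  rw [quadraticLoss_eq_add_of_mulVec_eq hsymm hθ₀ c θ]
  simpa using hS.dotProduct_mulVec_nonneg (θ - θ₀)

theorem diagonal_mulVec_ite_mem [NonUnitalNonAssocSemiring R] [DecidableEq n] (d : n → R)
    (Δ : Finset n) (θ : n → R) :
    (diagonal d *ᵥ fun j => if j ∈ Δ then 0 else θ j) =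
      fun j => if j ∈ Δ then 0 else (diagonal d *ᵥ θ) j := by
  funext j
  split_ifs <;> simp [mulVec_diagonal, *]

end

/-- For the population least-squares loss with diagonally scaled features,
`θ̄^Λ = Λ⁻¹ Σ⁻¹ b` is the population minimizer, and the natural importance
`I^N_Δ(θ̄^Λ) = L_Λ(θ̄^Λ_{Δ̄}) - L_Λ(θ̄^Λ)` is independent of the scaling `Λ`. -/
theorem natural_importance_scaling_invariant {p : ℕ}
    (Sig : Matrix (Fin p) (Fin p) ℝ) (hSig : Sig.PosDef)
    (b : Fin p → ℝ) (c : ℝ)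
    (d : Fin p → ℝ) (hd : ∀ i, d i ≠ 0) (Δ : Finset (Fin p)) :
    -- `L_Λ(θ) = E[y²] - 2(Λb)ᵀθ + θᵀ Λ Σ Λ θ`, with `c = E[y²]`
    let Lfun : Matrix (Fin p) (Fin p) ℝ → (Fin p → ℝ) → ℝ := fun Lam θ =>
      c - 2 * (Lam.mulVec b ⬝ᵥ θ) + θ ⬝ᵥ ((Lam * Sig * Lam).mulVec θ)
    let Λ : Matrix (Fin p) (Fin p) ℝ := Matrix.diagonal d
    let θbar : Fin p → ℝ := Sig⁻¹.mulVec b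
    let θbarΛ : Fin p → ℝ := (Matrix.diagonal fun i => (d i)⁻¹).mulVec θbar
    let prune : (Fin p → ℝ) → (Fin p → ℝ) := fun θ j => if j ∈ Δ then 0 else θ j
    (∀ θ : Fin p → ℝ, Lfun Λ θbarΛ ≤ Lfun Λ θ) ∧
      Lfun Λ (prune θbarΛ) - Lfun Λ θbarΛ = Lfun 1 (prune θbar) - Lfun 1 θbar := by
  intro Lfun Λ θbar θbarΛ prune
  have hscaled : ∀ θ, Lfun Λ θ = quadraticLoss Sig b c (Λ *ᵥ θ) := fun θ => by
    change quadraticLoss (Λ * Sig * Λ) (Λ *ᵥ b) c θ = _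
    simpa [Λ] using quadraticLoss_transpose_mul_mul Sig Λ b c θ
  have hunscaled : ∀ θ, Lfun 1 θ = quadraticLoss Sig b c θ := fun θ => by
    simp [Lfun, quadraticLoss]
  have hθbarΛ : Λ *ᵥ θbarΛ = θbar := by
    simp [Λ, θbarΛ, mulVec_mulVec, diagonal_mul_diagonal, hd]
  have hprune : Λ *ᵥ prune θbarΛ = prune θbar := by
    rw [← hθbarΛ]
    exact diagonal_mulVec_ite_mem d Δ θbarΛ
  have hθbar : Sig *ᵥ θbar = b := by
    simp [θbar, mulVec_mulVec, mul_nonsing_inv Sig (isUnit_iff_ne_zero.mpr hSig.det_pos.ne')]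
  refine ⟨fun θ => ?_, ?_⟩
  · rw [hscaled, hscaled, hθbarΛ]
    exact quadraticLoss_le_of_mulVec_eq hSig.posSemidef hθbar c _
  · rw [hscaled, hscaled, hunscaled, hunscaled, hprune, hθbarΛ]
end

section
/- For the two-layer ReLU network loss with twice-differentiable ℓ (and assuming no activation lies exactly at the kink), the output-layer partial Hessian scales as λ²: ∂²L/∂V²(θ^λ) = λ² ∂²L/∂V²(θ^1). Consequently, the Hessian-based importance of the output layer I^H_{Δ_V}(θ^λ) = Σ_{i∈Δ_V} H(θ^λ)_{ii}(θ^λ_i)² is independent of λ. -/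
/-!
The ReLU is positively homogeneous, so `max (λ z) 0 = λ max z 0` for `λ > 0`, and the network
output with first layer `λ W` and second layer `V'` equals the output with `W` and `λ V'`. The loss
along the slice `V' ↦ L(λ W, V')` is therefore `L(W, ·)` precomposed with `V' ↦ λ V'`, and by the
chain rule for a linear map every second derivative picks up a factor `λ²` while the base point
`λ⁻¹ V` is sent back to `V`. The diagonal Hessian entries thus scale by `λ²` and the weights
`(λ⁻¹ V)ᵢ` by `λ⁻¹`, so each summand `Hᵢᵢ θᵢ²` of the importance is unchanged.
-/

open Finset

section Scaling

variable {𝕜 E F : Type*} [NontriviallyNormedField 𝕜] [NormedAddCommGroup E] [NormedSpace 𝕜 E]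
  [NormedAddCommGroup F] [NormedSpace 𝕜 F]

theorem iteratedFDeriv_comp_const_smul_at_inv_smul {f : E → F} {n : ℕ} (hf : ContDiff 𝕜 n f)
    {c : 𝕜} (hc : c ≠ 0) (v : E) :
    iteratedFDeriv 𝕜 n (fun z => f (c • z)) (c⁻¹ • v) = c ^ n • iteratedFDeriv 𝕜 n f v := by
  rw [iteratedFDeriv_comp_const_smul c hf]
  simp only [smul_inv_smul₀ hc]

end Scaling

section TwoLayerReLU

variable {m d K n : ℕ}

def twoLayerReLU (W : Fin m → Fin d → ℝ) (V : Fin K → Fin m → ℝ) (x : Fin d → ℝ) : Fin K → ℝ :=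
  fun k => ∑ i, V k i * max (∑ j, W i j * x j) 0

noncomputable def empiricalLoss (ℓ : (Fin K → ℝ) → (Fin K → ℝ) → ℝ) (x : Fin n → Fin d → ℝ)
    (y : Fin n → Fin K → ℝ) (W : Fin m → Fin d → ℝ) (V : Fin K → Fin m → ℝ) : ℝ :=
  (1 / (n : ℝ)) * ∑ s, ℓ (y s) (twoLayerReLU W V (x s))

theorem twoLayerReLU_smul_left (W : Fin m → Fin d → ℝ) (V : Fin K → Fin m → ℝ)
    (x : Fin d → ℝ) {c : ℝ} (hc : 0 ≤ c) :
    twoLayerReLU (c • W) V x = twoLayerReLU W (c • V) x := by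
  funext k
  refine sum_congr rfl fun i _ => ?_
  have hrelu : max (∑ j, (c • W) i j * x j) 0 = c * max (∑ j, W i j * x j) 0 := by
    simp only [Pi.smul_apply, smul_eq_mul, mul_assoc, ← mul_sum, mul_max_of_nonneg _ _ hc,
      mul_zero]
  rw [hrelu, Pi.smul_apply, Pi.smul_apply, smul_eq_mul]
  ring

theorem contDiff_twoLayerReLU_right {r : WithTop ℕ∞} (W : Fin m → Fin d → ℝ) (x : Fin d → ℝ) :
    ContDiff ℝ r fun V : Fin K → Fin m → ℝ => twoLayerReLU W V x :=
  contDiff_pi.2 fun k => ContDiff.sum fun i _ => (contDiff_apply_apply ℝ ℝ k i).mul contDiff_const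

theorem empiricalLoss_smul_left (ℓ : (Fin K → ℝ) → (Fin K → ℝ) → ℝ) (x : Fin n → Fin d → ℝ)
    (y : Fin n → Fin K → ℝ) (W : Fin m → Fin d → ℝ) {c : ℝ} (hc : 0 ≤ c) :
    empiricalLoss ℓ x y (c • W) = fun V => empiricalLoss ℓ x y W (c • V) := by
  funext V
  simp only [empiricalLoss, twoLayerReLU_smul_left _ _ _ hc]

theorem contDiff_empiricalLoss {r : WithTop ℕ∞} {ℓ : (Fin K → ℝ) → (Fin K → ℝ) → ℝ}
    (hℓ : ∀ yv, ContDiff ℝ r (ℓ yv)) (x : Fin n → Fin d → ℝ) (y : Fin n → Fin K → ℝ)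
    (W : Fin m → Fin d → ℝ) : ContDiff ℝ r (empiricalLoss ℓ x y W) :=
  contDiff_const.mul <| ContDiff.sum fun s _ =>
    (hℓ (y s)).comp (contDiff_twoLayerReLU_right W (x s))

end TwoLayerReLU

/-- For the two-layer ReLU loss with a `C²` per-sample loss, the output-layer partial Hessian
scales as `λ²` along the family `θ^λ = (λW, λ⁻¹V)`; consequently the Hessian-based importance
of the output layer is independent of `λ`. -/
theorem output_hessian_scaling_and_HI_invariance {m d K n : ℕ}
    (W : Fin m → Fin d → ℝ) (V : Fin K → Fin m → ℝ)
    (x : Fin n → Fin d → ℝ) (y : Fin n → Fin K → ℝ)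
    (ℓ : (Fin K → ℝ) → (Fin K → ℝ) → ℝ)
    (hℓ : ∀ yv, ContDiff ℝ 2 (ℓ yv))
    (lam : ℝ) (hlam : 0 < lam) :
    let Lloss : (Fin m → Fin d → ℝ) → (Fin K → Fin m → ℝ) → ℝ := fun W' V' =>
      (1 / (n : ℝ)) *
        ∑ s, ℓ (y s) (fun k => ∑ i, V' k i * max (∑ j, W' i j * x s j) 0)
    let e : Fin K → Fin m → (Fin K → Fin m → ℝ) := fun k i => Pi.single k (Pi.single i 1)
    (∀ A B : Fin K → Fin m → ℝ,
        iteratedFDeriv ℝ 2 (fun V' => Lloss (lam • W) V') (lam⁻¹ • V) ![A, B] =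
          lam ^ 2 * iteratedFDeriv ℝ 2 (fun V' => Lloss W V') V ![A, B]) ∧
      (∑ k, ∑ i,
          iteratedFDeriv ℝ 2 (fun V' => Lloss (lam • W) V') (lam⁻¹ • V) ![e k i, e k i] *
            ((lam⁻¹ • V) k i) ^ 2) =
        ∑ k, ∑ i,
          iteratedFDeriv ℝ 2 (fun V' => Lloss W V') V ![e k i, e k i] * (V k i) ^ 2 := by
  intro Lloss e
  have hLloss : ∀ W', (fun V' => Lloss W' V') = empiricalLoss ℓ x y W' := fun _ => rfl
  have hessian : ∀ A B : Fin K → Fin m → ℝ,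
      iteratedFDeriv ℝ 2 (fun V' => Lloss (lam • W) V') (lam⁻¹ • V) ![A, B] =
        lam ^ 2 * iteratedFDeriv ℝ 2 (fun V' => Lloss W V') V ![A, B] := by
    intro A B
    rw [hLloss, hLloss, empiricalLoss_smul_left ℓ x y W hlam.le,
      iteratedFDeriv_comp_const_smul_at_inv_smul (contDiff_empiricalLoss hℓ x y W) hlam.ne',
      smul_apply, smul_eq_mul]
  refine ⟨hessian, sum_congr rfl fun k _ => sum_congr rfl fun i _ => ?_⟩
  rw [hessian, Pi.smul_apply, Pi.smul_apply, smul_eq_mul]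
  field_simp
end

section
/- Let Φ_S and φ_S be two random objectives indexed by closed sets S ⊆ R^p satisfying: (i) P(Φ_S < t) ≤ 2P(φ_S ≤ t) for every closed S and every t; let M be the set of global minimizers of Φ over R^p. Then for any closed set S, P(M ⊆ S^c) ≥ 1 − 2 min_t [P(φ_{R^p} ≥ t) + P(φ_S ≤ t)], provided additionally that P(Φ_{R^p} > t) ≤ 2P(φ_{R^p} ≥ t) for all t. -/
/-!
If some global minimizer of `L(·, ω)` lies in `S` while `Φ_{ℝ^p}(ω) ≤ t`, then `Φ_S(ω) ≤ t`.
Hence `{M ⊄ Sᶜ} ⊆ {Φ_{ℝ^p} > t} ∪ {Φ_S ≤ t}`, and a union bound with the two comparison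
inequalities gives the claim. The comparison for `Φ_S` is only assumed with a strict inequality
`Φ_S < t`; it passes to `Φ_S ≤ t` by right-continuity of the distribution function of `φ_S`.
-/

open MeasureTheory Filter Topology Set

theorem sInf_image_le_of_minimizer_mem {α : Type*} {f : α → ℝ} (hf : BddBelow (range f))
    {S : Set α} {w : α} (hwS : w ∈ S) (hw : f w = sInf (f '' univ)) :
    sInf (f '' S) ≤ sInf (f '' univ) :=
  hw ▸ csInf_le (hf.mono (image_subset_range f S)) (mem_image_of_mem f hwS)

theorem setOf_minimizers_not_subset_compl_subset {α Ω : Type*} {L : α → Ω → ℝ}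
    (hbdd : ∀ ω, BddBelow (range fun w => L w ω)) (S : Set α) (t : ℝ) :
    {ω | ¬ {w | L w ω = sInf ((L · ω) '' univ)} ⊆ Sᶜ} ⊆
      {ω | t < sInf ((L · ω) '' univ)} ∪ {ω | sInf ((L · ω) '' S) ≤ t} := by
  intro ω hω
  obtain ⟨w, hwM, hwS⟩ := not_subset.mp hω
  rcases lt_or_ge t (sInf ((L · ω) '' univ)) with hgt | hle
  · exact Or.inl hgt
  · exact Or.inr ((sInf_image_le_of_minimizer_mem (hbdd ω) (not_not.mp hwS) hwM).trans hle)

theorem measure_setOf_le_le_of_forall_lt {Ω : Type*} [MeasurableSpace Ω] {P : Measure Ω}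
    [IsFiniteMeasure P] {X Y : Ω → ℝ} (hY : Measurable Y) {c : ENNReal} (hc : c ≠ ⊤)
    (h : ∀ s, P {ω | X ω < s} ≤ c * P {ω | Y ω ≤ s}) (t : ℝ) :
    P {ω | X ω ≤ t} ≤ c * P {ω | Y ω ≤ t} := by
  have hcdf : Tendsto (fun s => P {ω | Y ω ≤ s}) (𝓝[>] t) (𝓝 (P {ω | Y ω ≤ t})) := by
    have hInter : ⋂ s > t, {ω | Y ω ≤ s} = {ω | Y ω ≤ t} := by
      ext ω
      simp only [mem_iInter]
      exact ⟨fun hω => le_of_forall_gt_imp_ge_of_dense hω, fun hω s hs => hω.trans hs.le⟩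
    rw [← hInter]
    refine tendsto_measure_biInter_gt (fun s _ => (hY measurableSet_Iic).nullMeasurableSet)
      (fun _ _ _ hij ω hω => le_trans hω hij) ⟨t + 1, by linarith, measure_ne_top P _⟩
  refine ge_of_tendsto (ENNReal.Tendsto.const_mul hcdf (Or.inr hc)) ?_
  filter_upwards [self_mem_nhdsWithin] with s hs
  exact (measure_mono fun ω (hω : X ω ≤ t) => show X ω < s from hω.trans_lt hs).trans (h s)

/-- CGMT-style localization of the global minima: if `P(Φ_S < t) ≤ 2P(φ_S ≤ t)` for every
closed `S` and `P(Φ_{ℝ^p} > t) ≤ 2P(φ_{ℝ^p} ≥ t)`, then for every closed `S` and every `t`,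
`P(M ⊆ Sᶜ) ≥ 1 - 2(P(φ_{ℝ^p} ≥ t) + P(φ_S ≤ t))`. -/
theorem minima_localization {p : ℕ} {Ω : Type*} [MeasurableSpace Ω]
    (P : Measure Ω) [IsProbabilityMeasure P]
    (LPO : (Fin p → ℝ) → Ω → ℝ)
    (φ : Set (Fin p → ℝ) → Ω → ℝ)
    (hbdd : ∀ ω, BddBelow (Set.range fun w => LPO w ω)) :
    let Φ : Set (Fin p → ℝ) → Ω → ℝ := fun S ω => sInf ((fun w => LPO w ω) '' S)
    let M : Ω → Set (Fin p → ℝ) := fun ω => {w | LPO w ω = Φ Set.univ ω}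
    (∀ S : Set (Fin p → ℝ), Measurable (Φ S)) →
    (∀ S : Set (Fin p → ℝ), Measurable (φ S)) →
    (∀ S : Set (Fin p → ℝ), IsClosed S → ∀ t : ℝ,
        P {ω | Φ S ω < t} ≤ 2 * P {ω | φ S ω ≤ t}) →
    (∀ t : ℝ, P {ω | Φ Set.univ ω > t} ≤ 2 * P {ω | φ Set.univ ω ≥ t}) →
    ∀ S : Set (Fin p → ℝ), IsClosed S → ∀ t : ℝ,
      1 - 2 * (P {ω | φ Set.univ ω ≥ t} + P {ω | φ S ω ≤ t}) ≤ P {ω | M ω ⊆ Sᶜ} := by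
  intro Φ M _ hφ hcompS hcompUniv S hS t
  have hcompS_le : P {ω | Φ S ω ≤ t} ≤ 2 * P {ω | φ S ω ≤ t} :=
    measure_setOf_le_le_of_forall_lt (hφ S) ENNReal.ofNat_ne_top (hcompS S hS) t
  have hbad : P {ω | M ω ⊆ Sᶜ}ᶜ ≤ 2 * (P {ω | φ univ ω ≥ t} + P {ω | φ S ω ≤ t}) :=
    calc P {ω | M ω ⊆ Sᶜ}ᶜ
        ≤ P ({ω | Φ univ ω > t} ∪ {ω | Φ S ω ≤ t}) :=
          measure_mono (setOf_minimizers_not_subset_compl_subset hbdd S t)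
      _ ≤ P {ω | Φ univ ω > t} + P {ω | Φ S ω ≤ t} := measure_union_le _ _
      _ ≤ 2 * (P {ω | φ univ ω ≥ t} + P {ω | φ S ω ≤ t}) := by
          rw [mul_add]; exact add_le_add (hcompUniv t) hcompS_le
  rw [tsub_le_iff_right]
  calc 1 = P univ := measure_univ.symm
    _ ≤ P {ω | M ω ⊆ Sᶜ} + P {ω | M ω ⊆ Sᶜ}ᶜ := measure_univ_le_add_compl _
    _ ≤ _ := by gcongr
end
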